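/- Let B be a finite Blaschke product of degree n ≥ 2 with B(0) = 0, let λ be a unimodular complex number, and let z_1,…,z_n ∈ 𝕋 be the n distinct solutions of B(z) = λ. Then B(z)/(z(B(z)-λ)) = ∑_{j=1}^n m_j/(z - z_j), where m_j = λ/(z_j B'(z_j)) = 1/|B'(z_j)|, and ∑_{j=1}^n m_j = 1. -/

import Mathlib

/-!
Write `B = α P / Q` with `P = ∏ (X - a k)` and `Q = ∏ (1 - conj (a k) X)`. Since `B 0 = 0`, some
`a k₀` vanishes, so `P = X p` and `deg Q < n`. Hence `α P - λ Q` has degree `n` and leading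
coefficient `α` and vanishes at the `n` points `z j`, so it equals `α t` with `t = ∏ (X - z j)`.
Then `B / (X (B - λ)) = p / t`, whose partial fraction coefficients `p (z j) / t' (z j)` equal
`λ / (z j B' (z j))` and add up to the leading coefficient `1` of `p` (Lagrange interpolation).
On the unit circle the logarithmic derivative gives `z B' / B = ∑ (1 - |a k|²) / |z - a k|² ≥ 0`,
hence `λ / (z j B' (z j)) = 1 / |B' (z j)|`.
-/

open Polynomial Finset ComplexConjugate

namespace Lagrange

variable {F ι : Type*} [Field F] [DecidableEq ι] {s : Finset ι} {v : ι → F} {f : F[X]}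

theorem eval_div_eval_nodal_eq_sum (hvs : Set.InjOn v s) (hf : f.degree < #s) {x : F}
    (hx : ∀ i ∈ s, x ≠ v i) :
    f.eval x / (nodal s v).eval x =
      ∑ i ∈ s, f.eval (v i) / (derivative (nodal s v)).eval (v i) / (x - v i) := by
  conv_lhs => rw [eq_interpolate hvs hf]
  rw [eval_interpolate_not_at_node _ hx, mul_div_cancel_left₀ _ (eval_nodal_not_at_node hx)]
  refine sum_congr rfl fun i hi => ?_
  rw [nodalWeight_eq_eval_derivative_nodal hi]
  ring

theorem coeff_card_sub_one_eq_sum (hvs : Set.InjOn v s) (hf : f.degree < #s) :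
    f.coeff (#s - 1) = ∑ i ∈ s, f.eval (v i) / (derivative (nodal s v)).eval (v i) := by
  rw [coeff_eq_sum hvs hf]
  refine sum_congr rfl fun i hi => ?_
  rw [eval_nodal_derivative_eval_node_eq hi, eval_nodal]

theorem nodal_eq_X_mul_nodal_erase {i : ι} (hi : i ∈ s) (hvi : v i = 0) :
    nodal s v = X * nodal (s.erase i) v := by
  rw [nodal_eq_mul_nodal_erase hi, hvi, map_zero, sub_zero]

end Lagrange

open Lagrange

noncomputable def blaschkeFactor (a w : ℂ) : ℂ := (w - a) / (1 - conj a * w)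

theorem one_sub_conj_mul_ne_zero {a w : ℂ} (ha : ‖a‖ < 1) (hw : ‖w‖ ≤ 1) :
    1 - conj a * w ≠ 0 := by
  refine sub_ne_zero.2 fun h => ?_
  have : ‖conj a * w‖ < 1 := by
    rw [norm_mul, Complex.norm_conj]
    exact (mul_le_of_le_one_right (norm_nonneg a) hw).trans_lt ha
  rw [← h, norm_one] at this
  exact lt_irrefl _ this

theorem hasDerivAt_blaschkeFactor {a w : ℂ} (h : 1 - conj a * w ≠ 0) :
    HasDerivAt (blaschkeFactor a) ((1 - conj a * a) / (1 - conj a * w) ^ 2) w := by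
  refine (((hasDerivAt_id' w).sub_const a).fun_div
    (((hasDerivAt_id' w).const_mul (conj a)).const_sub 1) h).congr_deriv ?_
  ring

theorem logDeriv_blaschkeFactor {a w : ℂ} (hwa : w ≠ a) (h : 1 - conj a * w ≠ 0) :
    logDeriv (blaschkeFactor a) w = (1 - conj a * a) / ((w - a) * (1 - conj a * w)) := by
  rw [logDeriv_apply, (hasDerivAt_blaschkeFactor h).deriv, blaschkeFactor]
  have := sub_ne_zero.2 hwa
  field_simp

theorem mul_logDeriv_blaschkeFactor_of_norm_eq_one {a w : ℂ} (ha : ‖a‖ < 1) (hw : ‖w‖ = 1) :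
    w * logDeriv (blaschkeFactor a) w = ((1 - ‖a‖ ^ 2) / ‖w - a‖ ^ 2 : ℝ) := by
  have hwa : w - a ≠ 0 := sub_ne_zero.2 (by rintro rfl; exact ha.ne hw)
  have hden := one_sub_conj_mul_ne_zero ha hw.le
  have hww : w * conj w = 1 := by rw [Complex.mul_conj', hw]; norm_num
  rw [logDeriv_blaschkeFactor (sub_ne_zero.1 hwa) hden]
  push_cast
  rw [← Complex.conj_mul', ← Complex.mul_conj', mul_div_assoc',
    div_eq_div_iff (mul_ne_zero hwa hden) (mul_ne_zero hwa ((_root_.map_ne_zero _).2 hwa))]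
  simp only [map_sub]
  linear_combination (1 - conj a * a) * (w - a) * hww

theorem norm_blaschkeFactor_of_norm_eq_one {a w : ℂ} (ha : ‖a‖ < 1) (hw : ‖w‖ = 1) :
    ‖blaschkeFactor a w‖ = 1 := by
  have hwa : w - a ≠ 0 := sub_ne_zero.2 (by rintro rfl; exact ha.ne hw)
  have hww : w * conj w = 1 := by rw [Complex.mul_conj', hw]; norm_num
  have : 1 - conj a * w = w * conj (w - a) := by
    rw [map_sub]; linear_combination -hww
  rw [blaschkeFactor, this, norm_div, norm_mul, hw, one_mul, Complex.norm_conj,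
    div_self (norm_ne_zero_iff.2 hwa)]

noncomputable def blaschke {ι : Type*} [Fintype ι] (α : ℂ) (a : ι → ℂ) (w : ℂ) : ℂ :=
  α * ∏ k, blaschkeFactor (a k) w

noncomputable def blaschkeDenom {ι : Type*} [Fintype ι] (a : ι → ℂ) : ℂ[X] :=
  ∏ k, (1 - C (conj (a k)) * X)

section BlaschkeProduct

variable {ι : Type*} [Fintype ι] {α : ℂ} {a : ι → ℂ}

theorem mul_deriv_blaschke_of_norm_eq_one (ha : ∀ k, ‖a k‖ < 1) {w : ℂ} (hw : ‖w‖ = 1) :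
    w * deriv (blaschke α a) w =
      blaschke α a w * ((∑ k, (1 - ‖a k‖ ^ 2) / ‖w - a k‖ ^ 2 : ℝ) : ℂ) := by
  rcases eq_or_ne α 0 with rfl | hα
  · have h0 : blaschke 0 a = 0 := funext fun w => zero_mul _
    simp [h0]
  have hfac : ∀ k, blaschkeFactor (a k) w ≠ 0 := fun k =>
    norm_ne_zero_iff.1 (by rw [norm_blaschkeFactor_of_norm_eq_one (ha k) hw]; exact one_ne_zero)
  have hdiff : ∀ k, DifferentiableAt ℂ (blaschkeFactor (a k)) w := fun k =>
    (hasDerivAt_blaschkeFactor (one_sub_conj_mul_ne_zero (ha k) hw.le)).differentiableAt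
  have hB : blaschke α a w ≠ 0 := mul_ne_zero hα (prod_ne_zero_iff.2 fun k _ => hfac k)
  have hlog : logDeriv (blaschke α a) w = ∑ k, logDeriv (blaschkeFactor (a k)) w := by
    rw [show blaschke α a = fun w => α * ∏ k, blaschkeFactor (a k) w from rfl,
      logDeriv_const_mul _ _ hα, logDeriv_prod (fun k _ => hfac k) (fun k _ => hdiff k)]
  rw [← mul_div_cancel₀ (deriv (blaschke α a) w) hB, ← logDeriv_apply, hlog, mul_left_comm,
    mul_sum, Complex.ofReal_sum]
  simp only [mul_logDeriv_blaschkeFactor_of_norm_eq_one (ha _) hw]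

theorem norm_blaschke_of_norm_eq_one (hα : ‖α‖ = 1) (ha : ∀ k, ‖a k‖ < 1) {w : ℂ}
    (hw : ‖w‖ = 1) : ‖blaschke α a w‖ = 1 := by
  simp [blaschke, norm_prod, hα, norm_blaschkeFactor_of_norm_eq_one (ha _) hw]

theorem blaschke_div_mul_deriv_of_norm_eq_one (hα : ‖α‖ = 1) (ha : ∀ k, ‖a k‖ < 1) {w : ℂ}
    (hw : ‖w‖ = 1) :
    blaschke α a w / (w * deriv (blaschke α a) w) =
      (1 : ℂ) / ((‖deriv (blaschke α a) w‖ : ℝ) : ℂ) := by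
  set r : ℝ := ∑ k, (1 - ‖a k‖ ^ 2) / ‖w - a k‖ ^ 2
  have hr : 0 ≤ r := sum_nonneg fun k _ =>
    div_nonneg (sub_nonneg.2 (pow_le_one₀ (norm_nonneg _) (ha k).le)) (sq_nonneg _)
  have hB := norm_blaschke_of_norm_eq_one hα ha hw
  have h := mul_deriv_blaschke_of_norm_eq_one (α := α) ha hw
  have hnorm : ‖deriv (blaschke α a) w‖ = r := by
    have := congrArg norm h
    rwa [norm_mul, norm_mul, hw, hB, one_mul, one_mul, Complex.norm_real,
      Real.norm_of_nonneg hr] at this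
  rw [h, hnorm, div_mul_cancel_left₀ (norm_ne_zero_iff.1 (hB ▸ one_ne_zero)), one_div]

theorem eval_blaschkeDenom (w : ℂ) :
    (blaschkeDenom a).eval w = ∏ k, (1 - conj (a k) * w) := by
  simp [blaschkeDenom, eval_prod]

theorem eval_blaschkeDenom_ne_zero (ha : ∀ k, ‖a k‖ < 1) {w : ℂ} (hw : ‖w‖ ≤ 1) :
    (blaschkeDenom a).eval w ≠ 0 := by
  rw [eval_blaschkeDenom]
  exact prod_ne_zero_iff.2 fun k _ => one_sub_conj_mul_ne_zero (ha k) hw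

theorem blaschke_eq_eval_div_eval (w : ℂ) :
    blaschke α a w = α * (nodal univ a).eval w / (blaschkeDenom a).eval w := by
  rw [blaschke, eval_nodal, eval_blaschkeDenom, mul_div_assoc, ← prod_div_distrib]
  rfl

theorem exists_eq_zero_of_blaschke_zero (hα : α ≠ 0) (h : blaschke α a 0 = 0) :
    ∃ k, a k = 0 := by
  simpa [blaschke, blaschkeFactor, hα, prod_eq_zero_iff] using h

theorem degree_blaschkeDenom_lt [DecidableEq ι] {k₀ : ι} (hk₀ : a k₀ = 0) :
    (blaschkeDenom a).degree < Fintype.card ι := by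
  rw [blaschkeDenom, ← mul_prod_erase _ _ (mem_univ k₀), hk₀, map_zero, map_zero, zero_mul,
    sub_zero, one_mul]
  have hle : (∏ k ∈ univ.erase k₀, (1 - C (conj (a k)) * X)).natDegree ≤ #(univ.erase k₀) := by
    refine (natDegree_prod_le _ _).trans
      ((sum_le_card_nsmul _ _ 1 fun k _ => by compute_degree!).trans_eq (by simp))
  rw [card_erase_of_mem (mem_univ k₀), card_univ] at hle
  refine degree_le_natDegree.trans_lt (WithBot.coe_lt_coe.2 (hle.trans_lt ?_))
  exact Nat.sub_lt (Fintype.card_pos_iff.2 ⟨k₀⟩) one_pos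

theorem blaschke_eq_mul_eval_div_eval [DecidableEq ι] {k₀ : ι} (hk₀ : a k₀ = 0) (w : ℂ) :
    blaschke α a w =
      α * (w * (nodal (univ.erase k₀) a).eval w) / (blaschkeDenom a).eval w := by
  rw [blaschke_eq_eval_div_eval, nodal_eq_X_mul_nodal_erase (mem_univ k₀) hk₀, eval_mul,
    eval_X]

theorem C_mul_X_mul_nodal_sub_C_mul_blaschkeDenom {κ : Type*} [Fintype κ] [DecidableEq ι]
    {k₀ : ι} {lam : ℂ} {z : κ → ℂ} (hα : α ≠ 0) (hk₀ : a k₀ = 0) (hz : Function.Injective z)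
    (hcard : Fintype.card κ = Fintype.card ι) (hq : ∀ j, (blaschkeDenom a).eval (z j) ≠ 0)
    (hBz : ∀ j, blaschke α a (z j) = lam) :
    C α * (X * nodal (univ.erase k₀) a) - C lam * blaschkeDenom a =
      C α * nodal univ z := by
  rw [← nodal_eq_X_mul_nodal_erase (mem_univ k₀) hk₀]
  have hdeg : (C lam * blaschkeDenom a).degree < (C α * nodal univ a).degree := by
    rw [degree_C_mul hα, degree_nodal, card_univ, ← smul_eq_C_mul]
    exact (degree_smul_le _ _).trans_lt (degree_blaschkeDenom_lt hk₀)
  apply eq_of_degree_le_of_eval_index_eq univ hz.injOn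
  · rw [degree_sub_eq_left_of_degree_lt hdeg, degree_C_mul hα, degree_nodal, card_univ,
      card_univ, hcard]
  · rw [degree_sub_eq_left_of_degree_lt hdeg, degree_C_mul hα, degree_C_mul hα,
      degree_nodal, degree_nodal, card_univ, card_univ, hcard]
  · rw [leadingCoeff_sub_of_degree_lt hdeg, leadingCoeff_mul, leadingCoeff_mul,
      nodal_monic, nodal_monic]
  · intro j _
    have := hBz j
    rw [blaschke_eq_eval_div_eval, div_eq_iff (hq j)] at this
    simp only [eval_sub, eval_mul, eval_C, eval_nodal_at_node (mem_univ j), mul_zero]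
    linear_combination this

end BlaschkeProduct

section LevelSet

-- `f = α X p / q` and `f - λ = α t / q`, so the zeros of `t` are the solutions of `f = λ`.

variable {𝕜 : Type*} [NontriviallyNormedField 𝕜] {f : 𝕜 → 𝕜} {α lam : 𝕜} {p q t : 𝕜[X]}

theorem div_mul_sub_eq_of_numerator_eq (hf : ∀ w, f w = α * (w * p.eval w) / q.eval w)
    (hnum : C α * (X * p) - C lam * q = C α * t) (hα : α ≠ 0) {w : 𝕜} (hw : w ≠ 0)
    (hq : q.eval w ≠ 0) : f w / (w * (f w - lam)) = p.eval w / t.eval w := by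
  have hsub : f w - lam = α * t.eval w / q.eval w := by
    have := congrArg (eval w) hnum
    simp only [eval_sub, eval_mul, eval_C, eval_X] at this
    rw [hf, div_sub' hq, ← this]
    ring
  rw [hsub, hf, show w * (α * t.eval w / q.eval w) = α * (w * t.eval w) / q.eval w by ring,
    div_div_div_cancel_right₀ hq, mul_div_mul_left _ _ hα, mul_div_mul_left _ _ hw]

theorem hasDerivAt_of_numerator_eq (hf : ∀ w, f w = α * (w * p.eval w) / q.eval w)
    (hnum : C α * (X * p) - C lam * q = C α * t) {x : 𝕜} (ht : t.eval x = 0)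
    (hq : q.eval x ≠ 0) : HasDerivAt f (α * (derivative t).eval x / q.eval x) x := by
  have hf' : f = fun w => (lam * q.eval w + α * t.eval w) / q.eval w := by
    funext w
    have := congrArg (eval w) hnum
    simp only [eval_sub, eval_mul, eval_C, eval_X] at this
    rw [hf, ← this]
    ring
  rw [hf']
  refine ((((q.hasDerivAt x).const_mul lam).fun_add ((t.hasDerivAt x).const_mul α)).fun_div
    (q.hasDerivAt x) hq).congr_deriv ?_
  rw [ht]
  field_simp
  ring

theorem div_mul_deriv_eq_of_numerator_eq (hf : ∀ w, f w = α * (w * p.eval w) / q.eval w)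
    (hnum : C α * (X * p) - C lam * q = C α * t) (hα : α ≠ 0) {x : 𝕜} (ht : t.eval x = 0)
    (hx : x ≠ 0) (hq : q.eval x ≠ 0) :
    lam / (x * deriv f x) = p.eval x / (derivative t).eval x := by
  have hlam : lam * q.eval x = α * (x * p.eval x) := by
    have := congrArg (eval x) hnum
    simp only [eval_sub, eval_mul, eval_C, eval_X, ht, mul_zero] at this
    linear_combination -this
  rw [(hasDerivAt_of_numerator_eq hf hnum ht hq).deriv,
    show x * (α * (derivative t).eval x / q.eval x) = α * (x * (derivative t).eval x) / q.eval x
      by ring, div_div_eq_mul_div, hlam, mul_div_mul_left _ _ hα, mul_div_mul_left _ _ hx]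

end LevelSet

theorem blaschke_partial_fractions_general (n : ℕ) (a : Fin n → ℂ)
    (ha : ∀ k, ‖a k‖ < 1) (α : ℂ) (hα : ‖α‖ = 1)
    (B : ℂ → ℂ)
    (hB : ∀ w, B w = α * ∏ k, (w - a k) / (1 - (starRingEnd ℂ) (a k) * w))
    (hB0 : B 0 = 0)
    (lam : ℂ)
    (z : Fin n → ℂ) (hzinj : Function.Injective z)
    (hz : ∀ j, ‖z j‖ = 1 ∧ B (z j) = lam)
    (m : Fin n → ℂ) (hm : ∀ j, m j = lam / (z j * deriv B (z j))) :
    (∀ j, m j = (1 : ℂ) / ((‖deriv B (z j)‖ : ℝ) : ℂ)) ∧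
      (∑ j, m j) = 1 ∧
      ∀ w : ℂ, (∀ k, 1 - (starRingEnd ℂ) (a k) * w ≠ 0) → w ≠ 0 →
        (∀ j, w ≠ z j) → B w ≠ lam →
        B w / (w * (B w - lam)) = ∑ j, m j / (w - z j) := by
  obtain rfl : B = blaschke α a := funext hB
  have hα0 : α ≠ 0 := norm_ne_zero_iff.1 (hα ▸ one_ne_zero)
  obtain ⟨k₀, hk₀⟩ := exists_eq_zero_of_blaschke_zero hα0 hB0
  have hq : ∀ j, (blaschkeDenom a).eval (z j) ≠ 0 :=
    fun j => eval_blaschkeDenom_ne_zero ha (hz j).1.le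
  have hf := blaschke_eq_mul_eval_div_eval (α := α) hk₀
  have hnum := C_mul_X_mul_nodal_sub_C_mul_blaschkeDenom hα0 hk₀ hzinj rfl hq fun j => (hz j).2
  set p := nodal (univ.erase k₀) a
  set t := nodal univ z
  have hres : ∀ j, m j = p.eval (z j) / (derivative t).eval (z j) := fun j =>
    (hm j).trans (div_mul_deriv_eq_of_numerator_eq hf hnum hα0
      (eval_nodal_at_node (mem_univ j)) (norm_ne_zero_iff.1 ((hz j).1 ▸ one_ne_zero))
      (hq j))
  have hpdeg : p.natDegree = #(univ : Finset (Fin n)) - 1 := by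
    rw [natDegree_nodal, card_erase_of_mem (mem_univ k₀)]
  have hp : p.degree < #(univ : Finset (Fin n)) := by
    rw [degree_eq_natDegree nodal_ne_zero, hpdeg]
    exact_mod_cast Nat.sub_lt (card_pos.2 ⟨k₀, mem_univ k₀⟩) one_pos
  refine ⟨fun j => ?_, ?_, fun w hw hw0 hwz _ => ?_⟩
  · rw [hm j, ← (hz j).2]
    exact blaschke_div_mul_deriv_of_norm_eq_one hα ha (hz j).1
  · rw [sum_congr rfl fun j _ => hres j, ← coeff_card_sub_one_eq_sum hzinj.injOn hp,
      ← hpdeg]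
    exact nodal_monic
  · rw [div_mul_sub_eq_of_numerator_eq hf hnum hα0 hw0
      (by rw [eval_blaschkeDenom]; exact prod_ne_zero_iff.2 fun k _ => hw k),
      eval_div_eval_nodal_eq_sum hzinj.injOn hp fun j _ => hwz j]
    exact sum_congr rfl fun j _ => by rw [hres]

/-- Partial fraction expansion for a Blaschke product `B` of degree `n ≥ 2` with
`B(0) = 0`: if `z 1, …, z n` are the `n` distinct unimodular solutions of `B(z) = λ`,
then `B(w)/(w(B(w)-λ)) = ∑ j, m j/(w - z j)` with `m j = λ/(z j B'(z j)) = 1/|B'(z j)|`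
and `∑ j, m j = 1`. -/
theorem blaschke_partial_fractions (n : ℕ) (hn : 2 ≤ n) (a : Fin n → ℂ)
    (ha : ∀ k, ‖a k‖ < 1) (α : ℂ) (hα : ‖α‖ = 1)
    (B : ℂ → ℂ)
    (hB : ∀ w, B w = α * ∏ k, (w - a k) / (1 - (starRingEnd ℂ) (a k) * w))
    (hB0 : B 0 = 0)
    (lam : ℂ) (hlam : ‖lam‖ = 1)
    (z : Fin n → ℂ) (hzinj : Function.Injective z)
    (hz : ∀ j, ‖z j‖ = 1 ∧ B (z j) = lam)
    (hzall : ∀ w : ℂ, ‖w‖ = 1 → B w = lam → ∃ j, w = z j)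
    (m : Fin n → ℂ) (hm : ∀ j, m j = lam / (z j * deriv B (z j))) :
    (∀ j, m j = (1 : ℂ) / ((‖deriv B (z j)‖ : ℝ) : ℂ)) ∧
      (∑ j, m j) = 1 ∧
      ∀ w : ℂ, (∀ k, 1 - (starRingEnd ℂ) (a k) * w ≠ 0) → w ≠ 0 →
        (∀ j, w ≠ z j) → B w ≠ lam →
        B w / (w * (B w - lam)) = ∑ j, m j / (w - z j) :=
  blaschke_partial_fractions_general n a ha α hα B hB hB0 lam z hzinj hz m hm
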